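/- arXiv:2308.03705 — 10 statements merged into one kernel-verified Lean document; each statement's English description precedes it below -/
import Mathlib

section
/- Soundness of the D_{ℚ,diff} saturation rules: for every set D of D_{ℚ,diff} constraints, every constraint β ∈ saturate(D) is entailed by D (i.e., every assignment satisfying all constraints of D satisfies β); in particular, if ⊥ ∈ saturate(D), then D is unsatisfiable. -/
/-- A `D_{ℚ,diff}` constraint over a set `V` of variables: `x = q`, `x > q`,
`x + q = y`, or the nullary constraint `⊥`. -/
inductive DiffConstraint (V : Type) : Type where
  | eq : V → ℚ → DiffConstraint V
  | gt : V → ℚ → DiffConstraint V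
  | diff : V → ℚ → V → DiffConstraint V
  | bot : DiffConstraint V

namespace DiffConstraint

/-- Satisfaction of a constraint by an assignment `v : V → ℚ`. -/
def Sat {V : Type} (v : V → ℚ) : DiffConstraint V → Prop
  | eq x q => v x = q
  | gt x q => v x > q
  | diff x q y => v x + q = v y
  | bot => False

/-- The variables occurring in a constraint. -/
def vars {V : Type} : DiffConstraint V → Set V
  | eq x _ => {x}
  | gt x _ => {x}
  | diff x _ y => {x, y}
  | bot => ∅

end DiffConstraint

/-- A variable occurs in the set `D` of constraints. -/
def OccursIn {V : Type} (D : Set (DiffConstraint V)) (x : V) : Prop :=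
  ∃ c ∈ D, x ∈ c.vars

/-- `saturate D` as an inductive predicate: the least superset of `D` closed under
the saturation rules R≠, R+, R0, R≠+, R−, R↔, R<, R=, R>. -/
inductive Saturate {V : Type} (D : Set (DiffConstraint V)) : DiffConstraint V → Prop
  | base {c : DiffConstraint V} : c ∈ D → Saturate D c
  | rneq {x : V} {q p : ℚ} : Saturate D (.eq x q) → Saturate D (.eq x p) → q ≠ p →
      Saturate D .bot
  | rplus {x y z : V} {q p : ℚ} : Saturate D (.diff x q y) → Saturate D (.diff y p z) →
      Saturate D (.diff x (q + p) z)
  | rzero {x : V} : OccursIn D x → Saturate D (.diff x 0 x)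
  | rneqplus {x y : V} {q p : ℚ} : Saturate D (.diff x q y) → Saturate D (.diff x p y) →
      q ≠ p → Saturate D .bot
  | rminus {x y : V} {q p : ℚ} : Saturate D (.eq x q) → Saturate D (.eq y p) →
      Saturate D (.diff x (p - q) y)
  | rsym {x y : V} {q : ℚ} : Saturate D (.diff x q y) → Saturate D (.diff y (-q) x)
  | rlt {x : V} {q p : ℚ} : Saturate D (.eq x q) → Saturate D (.gt x p) → q < p →
      Saturate D .bot
  | req {x y : V} {q p : ℚ} : Saturate D (.eq x q) → Saturate D (.diff x p y) →
      Saturate D (.eq y (q + p))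
  | rgt {x y : V} {q p : ℚ} : Saturate D (.gt x q) → Saturate D (.diff x p y) →
      Saturate D (.gt y (q + p))

/-- **Soundness of the `D_{ℚ,diff}` saturation rules.**
Every constraint in `saturate D` is entailed by `D`; in particular, if `⊥ ∈ saturate D`,
then `D` is unsatisfiable. -/
theorem saturate_sound {V : Type} [Countable V] [Infinite V]
    (D : Set (DiffConstraint V)) :
    (∀ β : DiffConstraint V, Saturate D β →
      ∀ v : V → ℚ, (∀ c ∈ D, DiffConstraint.Sat v c) → DiffConstraint.Sat v β) ∧
    (Saturate D DiffConstraint.bot →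
      ¬ ∃ v : V → ℚ, ∀ c ∈ D, DiffConstraint.Sat v c) := by
  have main : ∀ β : DiffConstraint V, Saturate D β →
      ∀ v : V → ℚ, (∀ c ∈ D, DiffConstraint.Sat v c) → DiffConstraint.Sat v β := by
    intro β h
    induction h with
    | base hc => intro v hv; exact hv _ hc
    | rneq h1 h2 hne ih1 ih2 =>
        intro v hv
        exact hne ((ih1 v hv).symm.trans (ih2 v hv))
    | rplus h1 h2 ih1 ih2 =>
        intro v hv
        have a := ih1 v hv; have b := ih2 v hv
        simp only [DiffConstraint.Sat] at *
        linarith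
    | rzero _ => intro v hv; simp [DiffConstraint.Sat]
    | rneqplus h1 h2 hne ih1 ih2 =>
        intro v hv
        have a := ih1 v hv; have b := ih2 v hv
        simp only [DiffConstraint.Sat] at *
        exact hne (by linarith)
    | rminus h1 h2 ih1 ih2 =>
        intro v hv
        have a := ih1 v hv; have b := ih2 v hv
        simp only [DiffConstraint.Sat] at *
        linarith
    | rsym h ih =>
        intro v hv
        have a := ih v hv
        simp only [DiffConstraint.Sat] at *
        linarith
    | rlt h1 h2 hlt ih1 ih2 =>
        intro v hv
        have a := ih1 v hv; have b := ih2 v hv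
        simp only [DiffConstraint.Sat] at *
        exact absurd a (by intro h; linarith)
    | req h1 h2 ih1 ih2 =>
        intro v hv
        have a := ih1 v hv; have b := ih2 v hv
        simp only [DiffConstraint.Sat] at *
        linarith
    | rgt h1 h2 ih1 ih2 =>
        intro v hv
        have a := ih1 v hv; have b := ih2 v hv
        simp only [DiffConstraint.Sat] at *
        linarith
  exact ⟨main, fun hbot ⟨v, hv⟩ => main _ hbot v hv⟩
end

section
/- Structure of ⊥-free saturated D_{ℚ,diff} constraint sets: let D' be a set of D_{ℚ,diff} constraints that is closed under the saturation rules and satisfies ⊥ ∉ D'. Then (a) for all variables x, y there is at most one q ∈ ℚ with (x + q = y) ∈ D'; and (b) the binary relation E = {(x, y) : (x + q = y) ∈ D' for some q ∈ ℚ} on variables is symmetric and transitive, so the directed graph with edge set E is a disjoint union of cliques. -/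
/-- **Structure of `⊥`-free saturated `D_{ℚ,diff}` constraint sets.**
If `D'` is closed under the saturation rules (`saturate D' = D'`) and `⊥ ∉ D'`, then
(a) for all variables `x, y` there is at most one `q` with `x + q = y` in `D'`; and
(b) the relation `E = {(x, y) : (x + q = y) ∈ D' for some q}` is symmetric and transitive,
so the directed graph with edge set `E` is a disjoint union of cliques. -/
theorem saturated_botFree_structure {V : Type} [Countable V] [Infinite V]
    (D' : Set (DiffConstraint V))
    (hclosed : {c : DiffConstraint V | Saturate D' c} = D')
    (hbot : DiffConstraint.bot ∉ D') :
    (∀ (x y : V) (q p : ℚ),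
        DiffConstraint.diff x q y ∈ D' → DiffConstraint.diff x p y ∈ D' → q = p) ∧
    (∀ x y : V, (∃ q : ℚ, DiffConstraint.diff x q y ∈ D') →
        ∃ q : ℚ, DiffConstraint.diff y q x ∈ D') ∧
    (∀ x y z : V, (∃ q : ℚ, DiffConstraint.diff x q y ∈ D') →
        (∃ q : ℚ, DiffConstraint.diff y q z ∈ D') →
        ∃ q : ℚ, DiffConstraint.diff x q z ∈ D') := by
  have hmem : ∀ c, Saturate D' c → c ∈ D' := fun c hc => hclosed ▸ hc
  refine ⟨?_, ?_, ?_⟩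
  · intro x y q p hq hp
    by_contra hne
    exact hbot (hmem _ (Saturate.rneqplus (.base hq) (.base hp) hne))
  · rintro x y ⟨q, hq⟩
    exact ⟨-q, hmem _ (Saturate.rsym (.base hq))⟩
  · rintro x y z ⟨q, hq⟩ ⟨p, hp⟩
    exact ⟨q + p, hmem _ (Saturate.rplus (.base hq) (.base hp))⟩
end

section
/- Inexpressibility of addition in D_{ℚ,diff}: for two fixed distinct variables x and y, there is no finite set S of D_{ℚ,diff} constraints, all of whose variables are among {x, y}, such that an assignment v satisfies every constraint in S if and only if v(x) + v(y) = 0. -/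
/-- **Inexpressibility of addition in `D_{ℚ,diff}`.**
For distinct variables `x` and `y`, there is no finite set `S` of `D_{ℚ,diff}` constraints
with variables among `{x, y}` such that an assignment `v` satisfies all of `S`
iff `v x + v y = 0`. -/
theorem addition_not_expressible_in_diff {V : Type} [Countable V] [Infinite V]
    (x y : V) (hxy : x ≠ y) :
    ¬ ∃ S : Set (DiffConstraint V), S.Finite ∧
        (∀ c ∈ S, c.vars ⊆ ({x, y} : Set V)) ∧
        (∀ v : V → ℚ, (∀ c ∈ S, DiffConstraint.Sat v c) ↔ v x + v y = 0) := by
  classical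
  rintro ⟨S, _hfin, hvars, hiff⟩
  have hyx : y ≠ x := hxy.symm
  set v0 : V → ℚ := fun _ => 0 with hv0
  set v1 : V → ℚ := fun z => if z = x then 1 else -1 with hv1
  set v2 : V → ℚ := fun z => if z = x then 2 else -1 with hv2
  have h0 : ∀ c ∈ S, DiffConstraint.Sat v0 c := (hiff v0).mpr (by simp [hv0])
  have h1 : ∀ c ∈ S, DiffConstraint.Sat v1 c := (hiff v1).mpr (by simp [hv1, hyx])
  have h2 : ∀ c ∈ S, DiffConstraint.Sat v2 c := by
    intro c hc
    have hv := hvars c hc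
    have s0 := h0 c hc
    have s1 := h1 c hc
    cases c with
    | eq z q =>
      have hz : z = x ∨ z = y := hv (by simp [DiffConstraint.vars])
      simp only [DiffConstraint.Sat, hv0, hv1] at s0 s1
      rcases hz with rfl | rfl
      · simp at s1; linarith
      · simp [hyx] at s1; linarith
    | gt z q =>
      have hz : z = x ∨ z = y := hv (by simp [DiffConstraint.vars])
      simp only [DiffConstraint.Sat, hv0, hv1] at s0 s1
      rcases hz with rfl | rfl
      · simp only [DiffConstraint.Sat, hv2]; simp at s1 ⊢; linarith
      · simp only [DiffConstraint.Sat, hv2]; simp [hyx] at s1 ⊢; linarith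
    | diff z q w =>
      have hz : z = x ∨ z = y := hv (by simp [DiffConstraint.vars])
      have hw : w = x ∨ w = y := hv (by simp [DiffConstraint.vars])
      simp only [DiffConstraint.Sat, hv0, hv1] at s0 s1
      rcases hz with rfl | rfl <;> rcases hw with rfl | rfl <;>
        simp only [DiffConstraint.Sat, hv2] <;>
        simp [hyx] at s1 ⊢ <;> linarith
    | bot => exact s0
  have := (hiff v2).mp h2
  simp [hv2, hyx] at this
  linarith
end

section
/- Convexity of D_{ℚ,lin}: let Γ and Δ be finite sets of linear equations over ℚⁿ with Δ nonempty. If every v ∈ ℚⁿ satisfying all equations of Γ satisfies at least one equation of Δ, then there exists a single equation δ ∈ Δ that is satisfied by every v ∈ ℚⁿ satisfying all equations of Γ. -/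
/-- Evaluating a linear form along the line through `x` and `y`. -/
lemma line_eval {n : ℕ} (a : Fin n → ℚ) (x y : Fin n → ℚ) (t : ℚ) :
    ∑ i, a i * (x i + t * (y i - x i)) =
      (∑ i, a i * x i) + t * ((∑ i, a i * y i) - ∑ i, a i * x i) := by
  rw [← Finset.sum_sub_distrib, Finset.mul_sum, ← Finset.sum_add_distrib]
  exact Finset.sum_congr rfl fun i _ => by ring

lemma lin_convex_finset (n : ℕ) (Γ : Set ((Fin n → ℚ) × ℚ))
    (D : Finset ((Fin n → ℚ) × ℚ)) (hne : D.Nonempty)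
    (h : ∀ v : Fin n → ℚ, (∀ e ∈ Γ, ∑ i, e.1 i * v i = e.2) →
        ∃ e ∈ D, ∑ i, e.1 i * v i = e.2) :
    ∃ δ ∈ D, ∀ v : Fin n → ℚ, (∀ e ∈ Γ, ∑ i, e.1 i * v i = e.2) →
        ∑ i, δ.1 i * v i = δ.2 := by
  classical
  induction D using Finset.cons_induction with
  | empty => exact absurd hne (by simp)
  | cons δ₀ D' hd IH =>
    by_cases hD' : D'.Nonempty ∧ ∀ v : Fin n → ℚ,
        (∀ e ∈ Γ, ∑ i, e.1 i * v i = e.2) → ∃ e ∈ D', ∑ i, e.1 i * v i = e.2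
    · obtain ⟨δ, hm, hp⟩ := IH hD'.1 hD'.2
      exact ⟨δ, Finset.mem_cons_of_mem hm, hp⟩
    · refine ⟨δ₀, Finset.mem_cons_self _ _, ?_⟩
      rcases D'.eq_empty_or_nonempty with hE | hNE
      · intro v hv
        obtain ⟨e, he, hse⟩ := h v hv
        subst hE
        simp only [Finset.cons_empty, Finset.mem_singleton] at he
        rwa [he] at hse
      · -- covering by D' fails: get x satisfying Γ but no equation of D'
        push_neg at hD'
        obtain ⟨x, hxΓ, hxD'⟩ := hD' hNE
        have hxδ₀ : ∑ i, δ₀.1 i * x i = δ₀.2 := by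
          obtain ⟨e, he, hse⟩ := h x hxΓ
          rcases Finset.mem_cons.mp he with rfl | he'
          · exact hse
          · exact absurd hse (hxD' e he')
        intro y hyΓ
        by_contra hny
        set v : ℚ → (Fin n → ℚ) := fun t i => x i + t * (y i - x i) with hvdef
        have hvΓ : ∀ t, ∀ e ∈ Γ, ∑ i, e.1 i * v t i = e.2 := by
          intro t e he
          have := line_eval e.1 x y t
          simp only [hvdef]
          rw [this, hxΓ e he, hyΓ e he]
          ring
        have hf : ∀ t : ℚ, ∃ e ∈ Finset.cons δ₀ D' hd, ∑ i, e.1 i * v t i = e.2 :=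
          fun t => h (v t) (hvΓ t)
        choose f hfm hfs using hf
        obtain ⟨t₁, -, t₂, -, ht12, hfeq⟩ :=
          Set.infinite_univ.exists_ne_map_eq_of_mapsTo
            (f := f) (fun t _ => hfm t)
            (Finset.cons δ₀ D' hd).finite_toSet
        set δ := f t₁ with hδ
        have h1 : (∑ i, δ.1 i * x i) + t₁ * ((∑ i, δ.1 i * y i) - ∑ i, δ.1 i * x i) = δ.2 := by
          have := hfs t₁; rwa [show v t₁ = fun i => x i + t₁ * (y i - x i) from rfl,
            line_eval] at this
        have h2 : (∑ i, δ.1 i * x i) + t₂ * ((∑ i, δ.1 i * y i) - ∑ i, δ.1 i * x i) = δ.2 := by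
          have := hfs t₂
          rw [← hfeq] at this
          rwa [show v t₂ = fun i => x i + t₂ * (y i - x i) from rfl, line_eval] at this
        have hB : (∑ i, δ.1 i * y i) - ∑ i, δ.1 i * x i = 0 := by
          have := sub_eq_zero.mpr (h1.trans h2.symm)
          have h3 : (t₁ - t₂) * ((∑ i, δ.1 i * y i) - ∑ i, δ.1 i * x i) = 0 := by
            linarith [this]
          rcases mul_eq_zero.mp h3 with h4 | h4
          · exact absurd (sub_eq_zero.mp h4) ht12
          · exact h4
        have hA : ∑ i, δ.1 i * x i = δ.2 := by
          have := h1; rw [hB, mul_zero, add_zero] at this; exact this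
        have hAy : ∑ i, δ.1 i * y i = δ.2 := by
          have := sub_eq_zero.mp hB; rw [this]; exact hA
        rcases Finset.mem_cons.mp (hfm t₁) with h5 | h5
        · rw [show δ = δ₀ from hδ.trans h5] at hAy; exact hny hAy
        · exact hxD' δ h5 hA

/-- **Convexity of `D_{ℚ,lin}`.**
Linear equations over `ℚⁿ` are represented as pairs `(a, b)` with `a : Fin n → ℚ`, `b : ℚ`;
a vector `v` satisfies `(a, b)` if `∑ i, a i * v i = b`.  If `Γ` and `Δ` are finite sets of
linear equations, `Δ` is nonempty, and every `v` satisfying all equations of `Γ` satisfies at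
least one equation of `Δ`, then some single equation `δ ∈ Δ` is satisfied by every `v`
satisfying all equations of `Γ`. -/
theorem lin_convex (n : ℕ) (Γ Δ : Set ((Fin n → ℚ) × ℚ))
    (hΓ : Γ.Finite) (hΔ : Δ.Finite) (hne : Δ.Nonempty)
    (h : ∀ v : Fin n → ℚ, (∀ e ∈ Γ, ∑ i, e.1 i * v i = e.2) →
        ∃ e ∈ Δ, ∑ i, e.1 i * v i = e.2) :
    ∃ δ ∈ Δ, ∀ v : Fin n → ℚ, (∀ e ∈ Γ, ∑ i, e.1 i * v i = e.2) →
        ∑ i, δ.1 i * v i = δ.2 := by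
  classical
  obtain ⟨δ, hδ, hp⟩ := lin_convex_finset n Γ hΔ.toFinset
    (by simpa using hne)
    (fun v hv => by
      obtain ⟨e, he, hse⟩ := h v hv
      exact ⟨e, hΔ.mem_toFinset.mpr he, hse⟩)
  exact ⟨δ, hΔ.mem_toFinset.mp hδ, hp⟩
end

section
/- Convexity of D_{ℚ,diff}: let Γ and Δ be finite sets of D_{ℚ,diff} constraints with Δ nonempty. If every assignment v : V → ℚ satisfying all constraints of Γ satisfies at least one constraint of Δ, then there exists a single constraint δ ∈ Δ that is satisfied by every assignment satisfying all constraints of Γ. -/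
theorem Set.Finite.isOpen_setOf_forall_apply_lt {ι α : Type*} [TopologicalSpace α] [LinearOrder α]
    [OrderClosedTopology α] {A : Set (ι × α)} (hA : A.Finite) :
    IsOpen {v : ι → α | ∀ p ∈ A, v p.1 < p.2} := by
  simp only [Set.ofPred_forall]
  exact hA.isOpen_biInter fun p _ => isOpen_lt (continuous_apply p.1) continuous_const

/-! The solution set `S` of `Γ` is closed under pointwise `min`, and it is relatively open along
lines: for `v, w ∈ S` the points `lineMap v w t` lie in `S` for all `t` near `0`, negative `t`
included, because equations are affine and strict bounds are open conditions.

Suppose every `δ ∈ Δ` fails somewhere on `S`. For a bound `x > q` of `Δ` that holds somewhere on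
`S`, extrapolating from a point where it fails gives a point of `S` with `v x < q`; the `min` of
these points violates all such bounds strictly, which is an open condition. The equations of `Δ`
are hyperplanes not containing `S`, so moving a little along a line towards a point off one of
them leaves that hyperplane while keeping all open conditions; doing this for each equation in
turn yields a point of `S` satisfying no constraint of `Δ`. -/

open AffineMap Filter Topology

theorem IsOpen.eventually_lineMap_mem {𝕜 E : Type*} [Ring 𝕜] [TopologicalSpace 𝕜]
    [AddCommGroup E] [Module 𝕜 E] [TopologicalSpace E] [IsTopologicalAddGroup E]
    [ContinuousSMul 𝕜 E] {U : Set E} (hU : IsOpen U) {v : E} (hv : v ∈ U) (w : E) :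
    ∀ᶠ t in 𝓝 (0 : 𝕜), lineMap v w t ∈ U :=
  (lineMap_continuous.tendsto' 0 v (lineMap_apply_zero v w)).eventually_mem (hU.mem_nhds hv)

theorem eventually_lineMap_ne_zero {𝕜 : Type*} [Field 𝕜] [TopologicalSpace 𝕜]
    [IsTopologicalRing 𝕜] [T1Space 𝕜] (a : 𝕜) {b : 𝕜} (hb : b ≠ 0) :
    ∀ᶠ t in 𝓝[≠] (0 : 𝕜), lineMap a b t ≠ 0 := by
  rcases eq_or_ne a 0 with rfl | ha
  · filter_upwards [self_mem_nhdsWithin] with t ht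
    simpa [lineMap_apply_ring'] using And.intro ht hb
  · exact (isOpen_compl_singleton.eventually_lineMap_mem ha b).filter_mono nhdsWithin_le_nhds

theorem InfClosed.exists_le_of_finite {α ι : Type*} [SemilatticeInf α] {S : Set α}
    (hS : InfClosed S) (hne : S.Nonempty) {s : Set ι} (hs : s.Finite) {f : ι → α}
    (hf : ∀ i ∈ s, f i ∈ S) : ∃ m ∈ S, ∀ i ∈ s, m ≤ f i := by
  induction s, hs using Set.Finite.induction_on with
  | empty => simpa [Set.Nonempty] using hne
  | @insert i s _ _ ih =>
    obtain ⟨m, hm, hms⟩ := ih fun j hj => hf j (.inr hj)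
    exact ⟨m ⊓ f i, hS hm (hf i (.inl rfl)),
      Set.forall_mem_insert.2 ⟨inf_le_right, fun j hj => inf_le_left.trans (hms j hj)⟩⟩

namespace DiffConstraint

variable {V : Type}

def solutions (Γ : Set (DiffConstraint V)) : Set (V → ℚ) :=
  {v | ∀ c ∈ Γ, Sat v c}

theorem sat_inf {v w : V → ℚ} {c : DiffConstraint V} (hv : Sat v c) (hw : Sat w c) :
    Sat (v ⊓ w) c := by
  cases c with
  | eq x q => simp_all [Sat]
  | gt x q => exact lt_min hv hw
  | diff x q y =>
    show min (v x) (w x) + q = min (v y) (w y)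
    rw [← hv, ← hw, min_add_add_right]
  | bot => exact hv

theorem infClosed_solutions (Γ : Set (DiffConstraint V)) : InfClosed (solutions Γ) :=
  fun _ hv _ hw c hc => sat_inf (hv c hc) (hw c hc)

theorem eventually_sat_lineMap {v w : V → ℚ} {c : DiffConstraint V} (hv : Sat v c)
    (hw : Sat w c) : ∀ᶠ t in 𝓝 (0 : ℚ), Sat (lineMap v w t) c := by
  cases c with
  | eq x q =>
    refine .of_forall fun t => ?_
    simp_all [Sat, pi_lineMap_apply]
  | gt x q => exact (isOpen_lt continuous_const (continuous_apply x)).eventually_lineMap_mem hv w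
  | diff x q y =>
    refine .of_forall fun t => ?_
    simp only [Sat, pi_lineMap_apply, lineMap_apply_ring'] at hv hw ⊢
    rw [← hv, ← hw]
    ring
  | bot => exact hv.elim

theorem eventually_lineMap_mem_solutions {Γ : Set (DiffConstraint V)} (hΓ : Γ.Finite)
    {v w : V → ℚ} (hv : v ∈ solutions Γ) (hw : w ∈ solutions Γ) :
    ∀ᶠ t in 𝓝 (0 : ℚ), lineMap v w t ∈ solutions Γ :=
  (eventually_all_finite hΓ).2 fun c hc => eventually_sat_lineMap (hv c hc) (hw c hc)

theorem exists_mem_solutions_apply_lt {Γ : Set (DiffConstraint V)} (hΓ : Γ.Finite)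
    {u v : V → ℚ} (hu : u ∈ solutions Γ) (hv : v ∈ solutions Γ) {x : V} (hvu : v x < u x) :
    ∃ w ∈ solutions Γ, w x < v x := by
  -- extrapolate past `v`, away from `u`
  obtain ⟨t, htS, ht⟩ := ((eventually_lineMap_mem_solutions hΓ hv hu).filter_mono
    nhdsWithin_le_nhds |>.and (self_mem_nhdsWithin (s := Set.Iio 0))).exists
  refine ⟨_, htS, ?_⟩
  rw [pi_lineMap_apply, lineMap_apply_ring']
  nlinarith

def IsEquation : DiffConstraint V → Prop
  | eq _ _ | diff _ _ _ => True
  | _ => False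

def residual : DiffConstraint V → (V → ℚ) → ℚ
  | eq x q, v => v x - q
  | diff x q y, v => v x + q - v y
  | _, _ => 0

theorem IsEquation.sat_iff {c : DiffConstraint V} (hc : c.IsEquation) (v : V → ℚ) :
    Sat v c ↔ residual c v = 0 := by
  cases c <;> simp_all [IsEquation, Sat, residual, sub_eq_zero]

theorem continuous_residual (c : DiffConstraint V) : Continuous (residual c) := by
  cases c <;> unfold residual <;> fun_prop

theorem residual_lineMap (c : DiffConstraint V) (v w : V → ℚ) (t : ℚ) :
    residual c (lineMap v w t) = lineMap (residual c v) (residual c w) t := by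
  cases c <;> simp only [residual, pi_lineMap_apply, lineMap_apply_ring'] <;> ring

theorem IsEquation.isOpen_setOf_not_sat {c : DiffConstraint V} (hc : c.IsEquation) :
    IsOpen {v | ¬ Sat v c} := by
  simp only [hc.sat_iff]
  exact isOpen_ne_fun (continuous_residual c) continuous_const

theorem IsEquation.eventually_not_sat_lineMap {c : DiffConstraint V} (hc : c.IsEquation)
    (v : V → ℚ) {w : V → ℚ} (hw : ¬ Sat w c) : ∀ᶠ t in 𝓝[≠] (0 : ℚ), ¬ Sat (lineMap v w t) c := by
  simp only [hc.sat_iff, residual_lineMap] at hw ⊢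
  exact eventually_lineMap_ne_zero _ hw

theorem exists_mem_solutions_inter_not_sat {Γ : Set (DiffConstraint V)} (hΓ : Γ.Finite)
    {U : Set (V → ℚ)} (hU : IsOpen U) {v w : V → ℚ} (hv : v ∈ solutions Γ ∩ U)
    (hw : w ∈ solutions Γ) {c : DiffConstraint V} (hc : c.IsEquation) (hwc : ¬ Sat w c) :
    ∃ v' ∈ solutions Γ ∩ U, ¬ Sat v' c := by
  obtain ⟨t, ⟨htS, htU⟩, htc⟩ := (((eventually_lineMap_mem_solutions hΓ hv.1 hw).and
    (hU.eventually_lineMap_mem hv.2 w)).filter_mono nhdsWithin_le_nhds |>.and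
    (hc.eventually_not_sat_lineMap v hwc)).exists
  exact ⟨_, ⟨htS, htU⟩, htc⟩

theorem exists_mem_solutions_inter_forall_not_sat {Γ : Set (DiffConstraint V)}
    (hΓ : Γ.Finite) {U : Set (V → ℚ)} (hU : IsOpen U) (hne : (solutions Γ ∩ U).Nonempty)
    {T : Set (DiffConstraint V)} (hT : T.Finite) (hTeq : ∀ c ∈ T, c.IsEquation)
    (hwit : ∀ c ∈ T, ∃ w ∈ solutions Γ, ¬ Sat w c) :
    ∃ v ∈ solutions Γ ∩ U, ∀ c ∈ T, ¬ Sat v c := by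
  induction T, hT using Set.Finite.induction_on with
  | empty => simpa [Set.Nonempty] using hne
  | @insert c T _ hT ih =>
    obtain ⟨v, hv, hvT⟩ := ih (fun d hd => hTeq d (.inr hd)) (fun d hd => hwit d (.inr hd))
    obtain ⟨w, hw, hwc⟩ := hwit c (.inl rfl)
    have hU' : IsOpen (U ∩ {v | ∀ d ∈ T, ¬ Sat v d}) := by
      simp only [Set.ofPred_forall]
      exact hU.inter (hT.isOpen_biInter fun d hd => (hTeq d (.inr hd)).isOpen_setOf_not_sat)
    obtain ⟨v', ⟨hv'S, hv'U, hv'T⟩, hv'c⟩ :=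
      exists_mem_solutions_inter_not_sat hΓ hU' ⟨hv.1, hv.2, hvT⟩ hw (hTeq c (.inl rfl)) hwc
    exact ⟨v', ⟨hv'S, hv'U⟩, Set.forall_mem_insert.2 ⟨hv'c, hv'T⟩⟩

end DiffConstraint

open DiffConstraint

theorem diff_convex_general {V : Type}
    (Γ Δ : Set (DiffConstraint V)) (hΓ : Γ.Finite) (hΔ : Δ.Finite) (hne : Δ.Nonempty)
    (h : ∀ v : V → ℚ, (∀ c ∈ Γ, DiffConstraint.Sat v c) →
        ∃ δ ∈ Δ, DiffConstraint.Sat v δ) :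
    ∃ δ ∈ Δ, ∀ v : V → ℚ, (∀ c ∈ Γ, DiffConstraint.Sat v c) → DiffConstraint.Sat v δ := by
  by_contra! hcon
  obtain ⟨v₀, hv₀, -⟩ := hcon _ hne.some_mem
  -- the bounds `x > q` of `Δ` that hold somewhere on the solution set
  set A : Set (V × ℚ) := {p | gt p.1 p.2 ∈ Δ ∧ ∃ u ∈ solutions Γ, p.2 < u p.1}
  have hA : A.Finite :=
    (hΔ.preimage fun p _ q _ h => Prod.ext (gt.inj h).1 (gt.inj h).2).subset fun _ hp => hp.1
  have hAwit : ∀ p ∈ A, ∃ w ∈ solutions Γ, w p.1 < p.2 := by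
    rintro ⟨x, q⟩ ⟨hxq, u, hu, hqu⟩
    obtain ⟨v, hv, hvx⟩ := hcon _ hxq
    obtain ⟨w, hw, hwv⟩ := exists_mem_solutions_apply_lt hΓ hu hv ((not_lt.1 hvx).trans_lt hqu)
    exact ⟨w, hw, hwv.trans_le (not_lt.1 hvx)⟩
  choose! w hwS hwA using hAwit
  obtain ⟨m, hm, hmw⟩ := (infClosed_solutions Γ).exists_le_of_finite ⟨v₀, hv₀⟩ hA hwS
  obtain ⟨v, ⟨hv, hvA⟩, hvT⟩ :=
    exists_mem_solutions_inter_forall_not_sat hΓ hA.isOpen_setOf_forall_apply_lt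
      ⟨m, hm, fun p hp => (hmw p hp p.1).trans_lt (hwA p hp)⟩ (hΔ.sep IsEquation)
      (fun c hc => hc.2) (fun c hc => hcon c hc.1)
  obtain ⟨δ, hδ, hvδ⟩ := h v hv
  cases δ with
  | gt x q => exact (hvA (x, q) ⟨hδ, v, hv, hvδ⟩).not_gt hvδ
  | bot => exact hvδ
  | eq x q | diff x q y => exact hvT _ ⟨hδ, trivial⟩ hvδ

/-- **Convexity of `D_{ℚ,diff}`.**
If `Γ` and `Δ` are finite sets of `D_{ℚ,diff}` constraints with `Δ` nonempty, and every
assignment satisfying all of `Γ` satisfies at least one constraint of `Δ`, then some single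
constraint `δ ∈ Δ` is satisfied by every assignment satisfying all of `Γ`. -/
theorem diff_convex {V : Type} [Countable V] [Infinite V]
    (Γ Δ : Set (DiffConstraint V)) (hΓ : Γ.Finite) (hΔ : Δ.Finite) (hne : Δ.Nonempty)
    (h : ∀ v : V → ℚ, (∀ c ∈ Γ, DiffConstraint.Sat v c) →
        ∃ δ ∈ Δ, DiffConstraint.Sat v δ) :
    ∃ δ ∈ Δ, ∀ v : V → ℚ, (∀ c ∈ Γ, DiffConstraint.Sat v c) → DiffConstraint.Sat v δ :=
  diff_convex_general Γ Δ hΓ hΔ hne h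
end

section
/- Canonical model for EL⊥ classifications: let O' be an EL⊥ ontology and N = {(C, D) : C, D ∈ sub(O') and O' ⊨ C ⊑ D}. Define the interpretation I' with domain Δ = {C ∈ sub(O') : (C, ⊥) ∉ N}, assumed nonempty, A^{I'} = {C ∈ Δ : (C, A) ∈ N} for every concept name A, and r^{I'} = {(C, D) ∈ Δ × Δ : (C, ∃r.D) ∈ N} for every role name r. Then (i) for every C ∈ Δ and every D ∈ sub(O'), C ∈ D^{I'} if and only if (C, D) ∈ N; and (ii) I' is a model of O'. -/
/-- EL⊥ concepts over concept names `C` and role names `R`. -/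
inductive ELConcept (C R : Type) : Type where
  | top : ELConcept C R
  | bot : ELConcept C R
  | atom (A : C) : ELConcept C R
  | inter (c d : ELConcept C R) : ELConcept C R
  | ex (r : R) (c : ELConcept C R) : ELConcept C R

/-- An interpretation: a nonempty domain, a set for each concept name, and a binary
relation for each role name. -/
structure ELInterp (C R : Type) : Type 1 where
  Dom : Type
  dom_nonempty : Nonempty Dom
  conSem : C → Set Dom
  roleSem : R → Set (Dom × Dom)

/-- Semantics of EL⊥ concepts. -/
def ELConcept.sem {C R : Type} (I : ELInterp C R) : ELConcept C R → Set I.Dom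
  | .top => Set.univ
  | .bot => ∅
  | .atom A => I.conSem A
  | .inter c d => c.sem I ∩ d.sem I
  | .ex r c => {x | ∃ y, (x, y) ∈ I.roleSem r ∧ y ∈ c.sem I}

/-- The subconcepts of a concept (including the concept itself). -/
def ELConcept.subc {C R : Type} : ELConcept C R → Set (ELConcept C R)
  | .top => {.top}
  | .bot => {.bot}
  | .atom A => {.atom A}
  | .inter c d => insert (.inter c d) (c.subc ∪ d.subc)
  | .ex r c => insert (.ex r c) c.subc

/-- An ontology is a set of axioms `C ⊑ D`, represented as pairs `(C, D)`. -/
abbrev ELOntology (C R : Type) := Set (ELConcept C R × ELConcept C R)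

/-- `I` is a model of the ontology `O`. -/
def IsModel {C R : Type} (I : ELInterp C R) (O : ELOntology C R) : Prop :=
  ∀ ax ∈ O, ax.1.sem I ⊆ ax.2.sem I

/-- `O ⊨ C ⊑ D`: every model of `O` satisfies `C ⊑ D`. -/
def Entails {C R : Type} (O : ELOntology C R) (c d : ELConcept C R) : Prop :=
  ∀ I : ELInterp C R, IsModel I O → c.sem I ⊆ d.sem I

/-- `sub(O)`: the subconcepts of concepts occurring in `O`. -/
def subO {C R : Type} (O : ELOntology C R) : Set (ELConcept C R) :=
  ⋃ ax ∈ O, ax.1.subc ∪ ax.2.subc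

/-- The classification `N = {(C, D) : C, D ∈ sub(O), O ⊨ C ⊑ D}`. -/
def CL {C R : Type} (O : ELOntology C R) : Set (ELConcept C R × ELConcept C R) :=
  {p | p.1 ∈ subO O ∧ p.2 ∈ subO O ∧ Entails O p.1 p.2}

/-- The domain of the canonical interpretation: `Δ = {C ∈ sub(O) : (C, ⊥) ∉ N}`. -/
def CanonDom {C R : Type} (O : ELOntology C R) : Type :=
  {E : ELConcept C R // E ∈ subO O ∧ (E, ELConcept.bot) ∉ CL O}

/-- The canonical interpretation `I'` built from the classification of `O`. -/
def canonInterp {C R : Type} (O : ELOntology C R) (hne : Nonempty (CanonDom O)) :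
    ELInterp C R where
  Dom := CanonDom O
  dom_nonempty := hne
  conSem A := {e : CanonDom O | (e.val, ELConcept.atom A) ∈ CL O}
  roleSem r := {p : CanonDom O × CanonDom O | (p.1.val, ELConcept.ex r p.2.val) ∈ CL O}

/-!
The canonical interpretation is read off the classification `N` itself. The truth lemma (i) goes by
induction on `D ∈ sub(O)`; the only real step is `∃r.D`, where `D` itself serves as the
`r`-successor: it lies in `Δ` because `D ⊑ ⊥` would force `C ⊑ ∃r.⊥ ⊑ ⊥`. Part (ii) then follows
from (i), since every axiom `C ⊑ D` of `O` composes with any entailment `E ⊑ C`.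
-/

namespace ELConcept

variable {C R : Type}

theorem mem_subc_self (D : ELConcept C R) : D ∈ D.subc := by
  cases D <;> simp [subc]

theorem subc_subset_of_mem_subc {D E : ELConcept C R} (h : E ∈ D.subc) : E.subc ⊆ D.subc := by
  induction D with
  | top | bot | atom => simp only [subc, Set.mem_singleton_iff] at h; subst h; rfl
  | inter c d ihc ihd =>
    simp only [subc, Set.mem_insert_iff, Set.mem_union] at h
    rcases h with rfl | h | h
    · rfl
    · exact (ihc h).trans (Set.subset_union_left.trans (Set.subset_insert _ _))
    · exact (ihd h).trans (Set.subset_union_right.trans (Set.subset_insert _ _))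
  | ex r c ihc =>
    simp only [subc, Set.mem_insert_iff] at h
    rcases h with rfl | h
    · rfl
    · exact (ihc h).trans (Set.subset_insert _ _)

end ELConcept

open ELConcept

variable {C R : Type} {O : ELOntology C R} {c d e : ELConcept C R}

theorem mem_subO_of_mem_subc (hd : d ∈ subO O) (he : e ∈ d.subc) : e ∈ subO O := by
  simp only [subO, Set.mem_iUnion, Set.mem_union] at hd ⊢
  obtain ⟨ax, hax, hd⟩ := hd
  exact ⟨ax, hax, hd.imp (subc_subset_of_mem_subc · he) (subc_subset_of_mem_subc · he)⟩

theorem fst_mem_subO {ax : ELConcept C R × ELConcept C R} (hax : ax ∈ O) : ax.1 ∈ subO O :=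
  Set.mem_biUnion hax (Or.inl (mem_subc_self _))

theorem snd_mem_subO {ax : ELConcept C R × ELConcept C R} (hax : ax ∈ O) : ax.2 ∈ subO O :=
  Set.mem_biUnion hax (Or.inr (mem_subc_self _))

namespace Entails

theorem refl (O : ELOntology C R) (c : ELConcept C R) : Entails O c c :=
  fun _ _ => subset_rfl

theorem trans (h₁ : Entails O c d) (h₂ : Entails O d e) : Entails O c e :=
  fun I hI => (h₁ I hI).trans (h₂ I hI)

theorem of_mem (h : (c, d) ∈ O) : Entails O c d :=
  fun _ hI => hI _ h

theorem inter_iff : Entails O c (.inter d e) ↔ Entails O c d ∧ Entails O c e :=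
  ⟨fun h => ⟨fun I hI _ hx => (h I hI hx).1, fun I hI _ hx => (h I hI hx).2⟩,
    fun h I hI _ hx => ⟨h.1 I hI hx, h.2 I hI hx⟩⟩

theorem ex_trans {r : R} (h₁ : Entails O c (.ex r d)) (h₂ : Entails O d e) :
    Entails O c (.ex r e) := fun I hI _ hx =>
  let ⟨y, hxy, hy⟩ := h₁ I hI hx
  ⟨y, hxy, h₂ I hI hy⟩

theorem bot_of_ex {r : R} (h₁ : Entails O c (.ex r d)) (h₂ : Entails O d .bot) :
    Entails O c .bot :=
  h₁.ex_trans h₂ |>.trans fun _ _ _ ⟨_, _, hy⟩ => hy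

end Entails

theorem mem_sem_canonInterp_iff (hne : Nonempty (CanonDom O)) {D : ELConcept C R}
    (hD : D ∈ subO O) (x : CanonDom O) :
    x ∈ D.sem (canonInterp O hne) ↔ (x.val, D) ∈ CL O := by
  induction D generalizing x with
  | top => exact iff_of_true trivial ⟨x.2.1, hD, fun _ _ _ _ => trivial⟩
  | bot => exact iff_of_false id x.2.2
  | atom A => rfl
  | inter c d ihc ihd =>
    have hc : c ∈ subO O := mem_subO_of_mem_subc hD (by simp [subc, mem_subc_self])
    have hd : d ∈ subO O := mem_subO_of_mem_subc hD (by simp [subc, mem_subc_self])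
    refine (and_congr (ihc hc x) (ihd hd x)).trans ⟨?_, ?_⟩
    · rintro ⟨⟨-, -, hxc⟩, -, -, hxd⟩
      exact ⟨x.2.1, hD, Entails.inter_iff.2 ⟨hxc, hxd⟩⟩
    · rintro ⟨-, -, hxcd⟩
      exact ⟨⟨x.2.1, hc, (Entails.inter_iff.1 hxcd).1⟩, ⟨x.2.1, hd, (Entails.inter_iff.1 hxcd).2⟩⟩
  | ex r c ih =>
    have hc : c ∈ subO O := mem_subO_of_mem_subc hD (by simp [subc, mem_subc_self])
    constructor
    · rintro ⟨y, ⟨-, -, hxy⟩, hyc⟩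
      exact ⟨x.2.1, hD, hxy.ex_trans ((ih hc y).1 hyc).2.2⟩
    · rintro ⟨-, -, hxc⟩
      have hcbot : (c, ELConcept.bot) ∉ CL O := fun ⟨_, hbot, hcb⟩ =>
        x.2.2 ⟨x.2.1, hbot, hxc.bot_of_ex hcb⟩
      exact ⟨⟨c, hc, hcbot⟩, ⟨x.2.1, hD, hxc⟩, (ih hc _).2 ⟨hc, hc, .refl O c⟩⟩

theorem isModel_canonInterp (hne : Nonempty (CanonDom O)) : IsModel (canonInterp O hne) O := by
  rintro ⟨c, d⟩ hax x hx
  have hc : c ∈ subO O := fst_mem_subO hax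
  have hd : d ∈ subO O := snd_mem_subO hax
  have hxc := (mem_sem_canonInterp_iff hne hc x).1 hx
  exact (mem_sem_canonInterp_iff hne hd x).2 ⟨hxc.1, hd, hxc.2.2.trans (.of_mem hax)⟩

theorem canonical_model_general {C R : Type} (O : ELOntology C R)
    (hne : Nonempty (CanonDom O)) :
    (∀ (e : CanonDom O) (D : ELConcept C R), D ∈ subO O →
      (e ∈ ELConcept.sem (canonInterp O hne) D ↔ (e.val, D) ∈ CL O)) ∧
    IsModel (canonInterp O hne) O := by
  exact ⟨fun x _ hD => mem_sem_canonInterp_iff hne hD x, isModel_canonInterp hne⟩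

/-- **Canonical model for EL⊥ classifications.**
(i) for every `C ∈ Δ` and `D ∈ sub(O)`, `C ∈ D^{I'}` iff `(C, D) ∈ N`; and
(ii) `I'` is a model of `O`. -/
theorem canonical_model {C R : Type} (O : ELOntology C R) (hfin : O.Finite)
    (hne : Nonempty (CanonDom O)) :
    (∀ (e : CanonDom O) (D : ELConcept C R), D ∈ subO O →
      (e ∈ ELConcept.sem (canonInterp O hne) D ↔ (e.val, D) ∈ CL O)) ∧
    IsModel (canonInterp O hne) O :=
  canonical_model_general O hne
end

section
/- Context lifting of concrete-domain inferences (core of Lemma 1): let D be a set of constraints, I an EL⊥[D] interpretation, C an EL⊥[D] concept, and γ₁, …, γₘ, δ ∈ D constraints such that every variable of δ occurs in some γᵢ and D ⊨ ⋀{γ₁, …, γₘ} → δ. If C^I ⊆ [γᵢ]^I for every i = 1, …, m, then C^I ⊆ [δ]^I. Consequently, replacing a concrete-domain inference with premises γ₁, …, γₘ and conclusion δ by the inference with premises C ⊑ [γ₁], …, C ⊑ [γₘ] and conclusion C ⊑ [δ] yields a sound inference step in EL⊥[D]. -/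
/-- An abstract concrete-domain constraint over the variables `V`: a finite set of
variables together with a satisfaction predicate on total assignments `V → ℚ` that
only depends on the values of those variables. -/
structure Constraint (V : Type) : Type where
  vars : Set V
  vars_finite : vars.Finite
  Sat : (V → ℚ) → Prop
  sat_congr : ∀ v w : V → ℚ, (∀ x ∈ vars, v x = w x) → Sat v → Sat w

/-- `D ⊨ ⋀S → β`: every assignment satisfying all constraints of `S` satisfies `β`. -/
def CDImp {V : Type} (S : Set (Constraint V)) (β : Constraint V) : Prop :=
  ∀ v : V → ℚ, (∀ α ∈ S, α.Sat v) → β.Sat v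

/-- `D ⊨ ⋀S → ⊥`: no assignment satisfies all constraints of `S`. -/
def CDUnsat {V : Type} (S : Set (Constraint V)) : Prop :=
  ¬ ∃ v : V → ℚ, ∀ α ∈ S, α.Sat v

/-- Convexity of a set `D` of constraints: whenever every assignment satisfying all
elements of a finite `S ⊆ D` satisfies some element of a finite nonempty `T ⊆ D`,
some single element of `T` is implied by `S`. -/
def CDConvex {V : Type} (D : Set (Constraint V)) : Prop :=
  ∀ S T : Set (Constraint V), S ⊆ D → T ⊆ D → S.Finite → T.Finite → T.Nonempty →
    (∀ v : V → ℚ, (∀ α ∈ S, α.Sat v) → ∃ β ∈ T, β.Sat v) →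
    ∃ β ∈ T, CDImp S β

/-- EL⊥[D] concepts over concept names `C`, role names `R` and constraints over
variables `V`. -/
inductive ELDConcept (C R V : Type) : Type where
  | top : ELDConcept C R V
  | bot : ELDConcept C R V
  | atom (A : C) : ELDConcept C R V
  | inter (c d : ELDConcept C R V) : ELDConcept C R V
  | ex (r : R) (c : ELDConcept C R V) : ELDConcept C R V
  | cst (α : Constraint V) : ELDConcept C R V

/-- An EL⊥[D] interpretation: a nonempty domain, sets for concept names, relations for
role names, and a partial function `Δ ⇀ ℚ` for each variable. -/
structure ELDInterp (C R V : Type) : Type 1 where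
  Dom : Type
  dom_nonempty : Nonempty Dom
  conSem : C → Set Dom
  roleSem : R → Set (Dom × Dom)
  featSem : V → Dom → Option ℚ

/-- Semantics of EL⊥[D] concepts; `[α]^I` is the set of `d` such that all variables of `α`
are defined at `d` and the resulting assignment satisfies `α`. -/
def ELDConcept.sem {C R V : Type} (I : ELDInterp C R V) : ELDConcept C R V → Set I.Dom
  | .top => Set.univ
  | .bot => ∅
  | .atom A => I.conSem A
  | .inter c d => c.sem I ∩ d.sem I
  | .ex r c => {x | ∃ y, (x, y) ∈ I.roleSem r ∧ y ∈ c.sem I}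
  | .cst α => {x | ∃ v : V → ℚ, (∀ z ∈ α.vars, I.featSem z x = some (v z)) ∧ α.Sat v}

/-- **Context lifting of concrete-domain inferences (core of Lemma 1).**
If `D ⊨ ⋀{γ₁, …, γₘ} → δ`, every variable of `δ` occurs in some `γᵢ`, and
`C^I ⊆ [γᵢ]^I` for every `i`, then `C^I ⊆ [δ]^I`.  Hence adding the DL context `C` to every
step of a concrete-domain proof yields sound inference steps in EL⊥[D]. -/
theorem context_lifting {C R V : Type} [Countable V] [Infinite V]
    (D : Set (Constraint V)) (I : ELDInterp C R V) (Cc : ELDConcept C R V)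
    (m : ℕ) (γ : Fin m → Constraint V) (δ : Constraint V)
    (hγD : ∀ i, γ i ∈ D) (hδD : δ ∈ D)
    (hvars : δ.vars ⊆ ⋃ i, (γ i).vars)
    (himp : CDImp {c : Constraint V | ∃ i, c = γ i} δ)
    (hprem : ∀ i, Cc.sem I ⊆ (ELDConcept.cst (γ i)).sem I) :
    Cc.sem I ⊆ (ELDConcept.cst δ).sem I := by
  intro d hd
  -- global assignment read off from the features of `d`
  set v : V → ℚ := fun x => (I.featSem x d).getD 0 with hv
  have hsat : ∀ i, (γ i).Sat v := by
    intro i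
    obtain ⟨w, hw, hws⟩ := hprem i hd
    refine (γ i).sat_congr w v (fun x hx => ?_) hws
    have := hw x hx
    simp [hv, this]
  have hδ : δ.Sat v := himp v (by rintro α ⟨i, rfl⟩; exact hsat i)
  refine ⟨v, fun z hz => ?_, hδ⟩
  obtain ⟨_, ⟨i, rfl⟩, hzi⟩ := hvars hz
  obtain ⟨w, hw, _⟩ := hprem i hd
  have := hw z hzi
  simp [hv, this]
end

section
/- Convex separation lemma: let D be a convex set of constraints, let S ⊆ D be a finite satisfiable set (some total assignment satisfies every element of S), and let T ⊆ D be a finite set such that for every β ∈ T it is not the case that D ⊨ ⋀S → β. Then there exists a single total assignment v : V → ℚ that satisfies every constraint of S and no constraint of T. -/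
/-- **Convex separation lemma.**
Let `D` be a convex set of constraints, `S ⊆ D` a finite satisfiable set, and `T ⊆ D` a
finite set such that no `β ∈ T` is implied by `S`.  Then a single assignment satisfies
every constraint of `S` and no constraint of `T`. -/
theorem convex_separation {V : Type} [Countable V] [Infinite V]
    (D : Set (Constraint V)) (hconv : CDConvex D)
    (S T : Set (Constraint V)) (hSD : S ⊆ D) (hTD : T ⊆ D)
    (hSfin : S.Finite) (hTfin : T.Finite)
    (hSsat : ∃ v : V → ℚ, ∀ α ∈ S, α.Sat v)
    (hT : ∀ β ∈ T, ¬ CDImp S β) :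
    ∃ v : V → ℚ, (∀ α ∈ S, α.Sat v) ∧ ∀ β ∈ T, ¬ β.Sat v := by
  rcases T.eq_empty_or_nonempty with rfl | hTne
  · obtain ⟨v, hv⟩ := hSsat
    exact ⟨v, hv, fun β hβ => absurd hβ (Set.notMem_empty β)⟩
  · by_contra h
    push_neg at h
    have hall : ∀ v : V → ℚ, (∀ α ∈ S, α.Sat v) → ∃ β ∈ T, β.Sat v := by
      intro v hv
      obtain ⟨β, hβT, hβsat⟩ := h v hv
      exact ⟨β, hβT, hβsat⟩
    obtain ⟨β, hβT, hβimp⟩ := hconv S T hSD hTD hSfin hTfin hTne hall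
    exact hT β hβT hβimp
end

section
/- Soundness of the ALC clausal rules: if an interpretation I satisfies every premise clause of an instance of rule A1, r1, or r2, then I satisfies the conclusion clause of that instance. Consequently, every clause in the closure of a set N of ALC clauses under the rules A1, r1, r2 is satisfied by every interpretation satisfying all clauses of N; in particular, if the empty clause is derivable from N, then N is inconsistent. -/
/-- An ALC literal: `A`, `¬A`, `∃r.A`, or `∀r.A`. -/
inductive ALCLit (C R : Type) : Type where
  | pos (A : C) : ALCLit C R
  | neg (A : C) : ALCLit C R
  | ex (r : R) (A : C) : ALCLit C R
  | all (r : R) (A : C) : ALCLit C R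
  deriving DecidableEq

/-- An ALC clause is a finite set of literals. -/
abbrev ALCClause (C R : Type) := Finset (ALCLit C R)

/-- An interpretation: a nonempty domain, a set for each concept name, and a binary
relation for each role name. -/
structure ALCInterp (C R : Type) : Type 1 where
  Dom : Type
  dom_nonempty : Nonempty Dom
  conSem : C → Set Dom
  roleSem : R → Set (Dom × Dom)

/-- Satisfaction of a literal by a domain element. -/
def ALCLit.holds {C R : Type} (I : ALCInterp C R) (d : I.Dom) : ALCLit C R → Prop
  | .pos A => d ∈ I.conSem A
  | .neg A => d ∉ I.conSem A
  | .ex r A => ∃ e, (d, e) ∈ I.roleSem r ∧ e ∈ I.conSem A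
  | .all r A => ∀ e, (d, e) ∈ I.roleSem r → e ∈ I.conSem A

/-- `I` satisfies a clause if every domain element satisfies some literal of it. -/
def ClauseSat {C R : Type} (I : ALCInterp C R) (cl : ALCClause C R) : Prop :=
  ∀ d : I.Dom, ∃ L ∈ cl, ALCLit.holds I d L

/-- The closure of a set `N` of ALC clauses under the rules A1, r1, r2. -/
inductive Derive {C R : Type} [DecidableEq C] [DecidableEq R]
    (N : Set (ALCClause C R)) : ALCClause C R → Prop
  | base {cl : ALCClause C R} : cl ∈ N → Derive N cl
  | a1 {c₁ c₂ : ALCClause C R} {A : C} :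
      Derive N (insert (ALCLit.pos A) c₁) → Derive N (insert (ALCLit.neg A) c₂) →
      Derive N (c₁ ∪ c₂)
  | r1 {n : ℕ} {r : R} {D : C} {cl : ALCClause C R}
      {Cs : Fin n → ALCClause C R} {Ds : Fin n → C} :
      Derive N (insert (ALCLit.ex r D) cl) →
      (∀ i, Derive N (insert (ALCLit.all r (Ds i)) (Cs i))) →
      Derive N (Finset.image (fun i => ALCLit.neg (Ds i) : Fin n → ALCLit C R) Finset.univ) →
      Derive N (cl ∪ Finset.univ.biUnion Cs)
  | r2 {n : ℕ} {r : R} {D : C} {cl : ALCClause C R}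
      {Cs : Fin n → ALCClause C R} {Ds : Fin n → C} :
      Derive N (insert (ALCLit.ex r D) cl) →
      (∀ i, Derive N (insert (ALCLit.all r (Ds i)) (Cs i))) →
      Derive N (insert (ALCLit.neg D)
        (Finset.image (fun i => ALCLit.neg (Ds i) : Fin n → ALCLit C R) Finset.univ)) →
      Derive N (cl ∪ Finset.univ.biUnion Cs)

/-- The literal `L` occurs in (a clause of) `N`. -/
def OccursLit {C R : Type} (N : Set (ALCClause C R)) (L : ALCLit C R) : Prop :=
  ∃ cl ∈ N, L ∈ cl

lemma a1_sound {C R : Type} [DecidableEq C] [DecidableEq R]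
    (I : ALCInterp C R) (c₁ c₂ : ALCClause C R) (A : C)
    (h1 : ClauseSat I (insert (ALCLit.pos A) c₁))
    (h2 : ClauseSat I (insert (ALCLit.neg A) c₂)) :
    ClauseSat I (c₁ ∪ c₂) := by
  intro d
  obtain ⟨L1, hL1, hh1⟩ := h1 d
  obtain ⟨L2, hL2, hh2⟩ := h2 d
  rcases Finset.mem_insert.1 hL1 with rfl | hL1
  · rcases Finset.mem_insert.1 hL2 with rfl | hL2
    · exact absurd hh1 hh2
    · exact ⟨L2, Finset.mem_union_right _ hL2, hh2⟩
  · exact ⟨L1, Finset.mem_union_left _ hL1, hh1⟩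

lemma r_sound {C R : Type} [DecidableEq C] [DecidableEq R]
    (I : ALCInterp C R) (n : ℕ) (r : R) (D : C) (cl : ALCClause C R)
    (Cs : Fin n → ALCClause C R) (Ds : Fin n → C)
    (h1 : ClauseSat I (insert (ALCLit.ex r D) cl))
    (h2 : ∀ i, ClauseSat I (insert (ALCLit.all r (Ds i)) (Cs i)))
    (h3 : ∀ e : I.Dom, e ∈ I.conSem D →
      ∃ i : Fin n, e ∉ I.conSem (Ds i)) :
    ClauseSat I (cl ∪ Finset.univ.biUnion Cs) := by
  intro d
  obtain ⟨L1, hL1, hh1⟩ := h1 d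
  rcases Finset.mem_insert.1 hL1 with rfl | hL1
  · obtain ⟨e, hre, heD⟩ := hh1
    obtain ⟨i, hi⟩ := h3 e heD
    obtain ⟨L2, hL2, hh2⟩ := h2 i d
    rcases Finset.mem_insert.1 hL2 with rfl | hL2
    · exact absurd (hh2 e hre) hi
    · exact ⟨L2, Finset.mem_union_right _
        (Finset.mem_biUnion.2 ⟨i, Finset.mem_univ i, hL2⟩), hh2⟩
  · exact ⟨L1, Finset.mem_union_left _ hL1, hh1⟩

/-- **Soundness of the ALC clausal rules.**
Each instance of A1, r1, r2 preserves satisfaction by an interpretation; consequently every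
clause derivable from `N` is satisfied by every interpretation satisfying all clauses of `N`,
and if the empty clause is derivable from `N` then `N` is inconsistent. -/
theorem alc_rules_sound {C R : Type} [DecidableEq C] [DecidableEq R] :
    (∀ (I : ALCInterp C R) (c₁ c₂ : ALCClause C R) (A : C),
      ClauseSat I (insert (ALCLit.pos A) c₁) → ClauseSat I (insert (ALCLit.neg A) c₂) →
      ClauseSat I (c₁ ∪ c₂)) ∧
    (∀ (I : ALCInterp C R) (n : ℕ) (r : R) (D : C) (cl : ALCClause C R)
        (Cs : Fin n → ALCClause C R) (Ds : Fin n → C),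
      ClauseSat I (insert (ALCLit.ex r D) cl) →
      (∀ i, ClauseSat I (insert (ALCLit.all r (Ds i)) (Cs i))) →
      ClauseSat I
        (Finset.image (fun i => ALCLit.neg (Ds i) : Fin n → ALCLit C R) Finset.univ) →
      ClauseSat I (cl ∪ Finset.univ.biUnion Cs)) ∧
    (∀ (I : ALCInterp C R) (n : ℕ) (r : R) (D : C) (cl : ALCClause C R)
        (Cs : Fin n → ALCClause C R) (Ds : Fin n → C),
      ClauseSat I (insert (ALCLit.ex r D) cl) →
      (∀ i, ClauseSat I (insert (ALCLit.all r (Ds i)) (Cs i))) →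
      ClauseSat I (insert (ALCLit.neg D)
        (Finset.image (fun i => ALCLit.neg (Ds i) : Fin n → ALCLit C R) Finset.univ)) →
      ClauseSat I (cl ∪ Finset.univ.biUnion Cs)) ∧
    (∀ (N : Set (ALCClause C R)) (I : ALCInterp C R),
      (∀ cl ∈ N, ClauseSat I cl) → ∀ cl, Derive N cl → ClauseSat I cl) ∧
    (∀ N : Set (ALCClause C R), Derive N (∅ : ALCClause C R) →
      ¬ ∃ I : ALCInterp C R, ∀ cl ∈ N, ClauseSat I cl) := by
  have hr1 : ∀ (I : ALCInterp C R) (n : ℕ) (r : R) (D : C) (cl : ALCClause C R)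
      (Cs : Fin n → ALCClause C R) (Ds : Fin n → C),
      ClauseSat I (insert (ALCLit.ex r D) cl) →
      (∀ i, ClauseSat I (insert (ALCLit.all r (Ds i)) (Cs i))) →
      ClauseSat I
        (Finset.image (fun i => ALCLit.neg (Ds i) : Fin n → ALCLit C R) Finset.univ) →
      ClauseSat I (cl ∪ Finset.univ.biUnion Cs) := by
    intro I n r D cl Cs Ds h1 h2 h3
    refine r_sound I n r D cl Cs Ds h1 h2 ?_
    intro e _
    obtain ⟨L, hL, hh⟩ := h3 e
    obtain ⟨i, _, rfl⟩ := Finset.mem_image.1 hL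
    exact ⟨i, hh⟩
  have hr2 : ∀ (I : ALCInterp C R) (n : ℕ) (r : R) (D : C) (cl : ALCClause C R)
      (Cs : Fin n → ALCClause C R) (Ds : Fin n → C),
      ClauseSat I (insert (ALCLit.ex r D) cl) →
      (∀ i, ClauseSat I (insert (ALCLit.all r (Ds i)) (Cs i))) →
      ClauseSat I (insert (ALCLit.neg D)
        (Finset.image (fun i => ALCLit.neg (Ds i) : Fin n → ALCLit C R) Finset.univ)) →
      ClauseSat I (cl ∪ Finset.univ.biUnion Cs) := by
    intro I n r D cl Cs Ds h1 h2 h3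
    refine r_sound I n r D cl Cs Ds h1 h2 ?_
    intro e heD
    obtain ⟨L, hL, hh⟩ := h3 e
    rcases Finset.mem_insert.1 hL with rfl | hL
    · exact absurd heD hh
    · obtain ⟨i, _, rfl⟩ := Finset.mem_image.1 hL
      exact ⟨i, hh⟩
  have hclos : ∀ (N : Set (ALCClause C R)) (I : ALCInterp C R),
      (∀ cl ∈ N, ClauseSat I cl) → ∀ cl, Derive N cl → ClauseSat I cl := by
    intro N I hN cl hder
    induction hder with
    | base h => exact hN _ h
    | a1 _ _ ih1 ih2 => exact a1_sound I _ _ _ ih1 ih2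
    | r1 _ _ _ ih1 ih2 ih3 => exact hr1 I _ _ _ _ _ _ ih1 ih2 ih3
    | r2 _ _ _ ih1 ih2 ih3 => exact hr2 I _ _ _ _ _ _ ih1 ih2 ih3
  refine ⟨a1_sound, hr1, hr2, hclos, ?_⟩
  rintro N hder ⟨I, hI⟩
  obtain ⟨d⟩ := I.dom_nonempty
  obtain ⟨L, hL, _⟩ := hclos N I hI ∅ hder d
  exact absurd hL (Finset.notMem_empty L)
end

section
/- Exponential bound on the ALC calculus: every clause in the closure of a finite set N of ALC clauses under the rules A1, r1, r2 consists solely of literals that occur in clauses of N; consequently, the closure contains at most 2^L distinct clauses, where L is the number of distinct literals occurring in N, and in particular the closure is finite. -/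
/-- **Exponential bound on the ALC calculus.**
Every clause derivable from a finite set `N` consists solely of literals occurring in `N`;
hence the closure of `N` is finite and contains at most `2^L` clauses, where `L` is the
number of distinct literals occurring in `N`. -/
theorem alc_closure_exponential_bound {C R : Type} [DecidableEq C] [DecidableEq R]
    (N : Set (ALCClause C R)) (hfin : N.Finite) :
    (∀ cl : ALCClause C R, Derive N cl → ∀ L ∈ cl, OccursLit N L) ∧
    Set.Finite {cl : ALCClause C R | Derive N cl} ∧
    Set.ncard {cl : ALCClause C R | Derive N cl} ≤
      2 ^ Set.ncard {L : ALCLit C R | OccursLit N L} := by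
  have occ : ∀ cl : ALCClause C R, Derive N cl → ∀ L ∈ cl, OccursLit N L := by
    intro cl h
    induction h with
    | base hmem => intro L hL; exact ⟨_, hmem, hL⟩
    | a1 h1 h2 ih1 ih2 =>
        intro L hL
        rcases Finset.mem_union.mp hL with h | h
        · exact ih1 L (Finset.mem_insert_of_mem h)
        · exact ih2 L (Finset.mem_insert_of_mem h)
    | r1 h1 h2 h3 ih1 ih2 ih3 =>
        intro L hL
        rcases Finset.mem_union.mp hL with h | h
        · exact ih1 L (Finset.mem_insert_of_mem h)
        · rcases Finset.mem_biUnion.mp h with ⟨i, _, hi⟩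
          exact ih2 i L (Finset.mem_insert_of_mem hi)
    | r2 h1 h2 h3 ih1 ih2 ih3 =>
        intro L hL
        rcases Finset.mem_union.mp hL with h | h
        · exact ih1 L (Finset.mem_insert_of_mem h)
        · rcases Finset.mem_biUnion.mp h with ⟨i, _, hi⟩
          exact ih2 i L (Finset.mem_insert_of_mem hi)
  have hS : Set.Finite {L : ALCLit C R | OccursLit N L} := by
    have : {L : ALCLit C R | OccursLit N L} = ⋃ cl ∈ N, (↑cl : Set (ALCLit C R)) := by
      ext L
      simp [OccursLit]
    rw [this]
    exact hfin.biUnion (fun cl _ => cl.finite_toSet)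
  classical
  set F : Finset (ALCLit C R) := hS.toFinset with hF
  have hsub : {cl : ALCClause C R | Derive N cl} ⊆ ↑F.powerset := by
    intro cl hcl
    simp only [Finset.coe_powerset, Set.mem_preimage, Set.mem_powerset_iff]
    intro L hL
    simp only [hF, Set.Finite.coe_toFinset]
    exact occ cl hcl L hL
  have hfin2 : Set.Finite {cl : ALCClause C R | Derive N cl} :=
    (F.powerset.finite_toSet).subset hsub
  refine ⟨occ, hfin2, ?_⟩
  calc Set.ncard {cl : ALCClause C R | Derive N cl}
      ≤ Set.ncard (↑F.powerset : Set (ALCClause C R)) :=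
        Set.ncard_le_ncard hsub (F.powerset.finite_toSet)
    _ = F.powerset.card := by rw [Set.ncard_coe_finset]
    _ = 2 ^ F.card := Finset.card_powerset F
    _ = 2 ^ Set.ncard {L : ALCLit C R | OccursLit N L} := by
        rw [hF, Set.ncard_eq_toFinset_card _ hS]
end
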